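/- Let G be a simple graph on a finite vertex set V and let A ⊆ V be such that the cut of G at A has no induced matching of size 2. Fix a chain order < on A and let <ʳ denote its reverse order (v <ʳ w iff w < v); then <ʳ is a chain order on A with respect to the complement graph of G. Let S and S′ be co-cluster sets of G contained in A that are <ʳ-equivalent with respect to the complement graph of G, and let T be any subset of V ∖ A. Then S ∪ T is a co-cluster set of G if and only if S′ ∪ T is a co-cluster set of G. -/
import Mathlib


/-- An induced matching in the cut of `G` at `A`, witnessed by endpoint functions `x` (inside `A`)
and `y` (outside `A`). -/
def IsCutIM {V : Type*} (G : SimpleGraph V) (A : Set V) {k : ℕ} (x y : Fin k → V) : Prop :=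
  Function.Injective x ∧ Function.Injective y ∧
    (∀ i, x i ∈ A) ∧ (∀ i, y i ∉ A) ∧
    (∀ i, G.Adj (x i) (y i)) ∧ (∀ i j, i ≠ j → ¬ G.Adj (x i) (y j))

/-- The cut of `G` at `A` has an induced matching of size `k`. -/
def CutIM {V : Type*} (G : SimpleGraph V) (A : Set V) (k : ℕ) : Prop :=
  ∃ x y : Fin k → V, IsCutIM G A x y

/-- `v` and `w` lie in `S` and are joined by a path inside the induced subgraph `G[S]`. -/
def InducedReach {V : Type*} (G : SimpleGraph V) (S : Set V) (v w : V) : Prop :=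
  ∃ (hv : v ∈ S) (hw : w ∈ S), (G.induce S).Reachable ⟨v, hv⟩ ⟨w, hw⟩

/-- The connected component of `v` in the induced subgraph `G[S]`, as a subset of `S`. -/
def indComp {V : Type*} (G : SimpleGraph V) (S : Set V) (v : V) : Set V :=
  {w | InducedReach G S v w}

/-- `S` is a cluster set of `G`: every connected component of `G[S]` is a complete graph, i.e.
any two distinct vertices in the same component of `G[S]` are adjacent. -/
def IsClusterSet {V : Type*} (G : SimpleGraph V) (S : Set V) : Prop :=
  ∀ v w, InducedReach G S v w → v ≠ w → G.Adj v w

/-- `lt` is a chain order on `A` (w.r.t. `G`): a (strict) linear order on `A` such that `v < w`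
implies `N(v) ∖ A ⊆ N(w) ∖ A`. -/
structure ChainOrderOn {V : Type*} (G : SimpleGraph V) (A : Set V) (lt : V → V → Prop) : Prop where
  trans : ∀ ⦃a⦄, a ∈ A → ∀ ⦃b⦄, b ∈ A → ∀ ⦃c⦄, c ∈ A → lt a b → lt b c → lt a c
  irrefl : ∀ a ∈ A, ¬ lt a a
  total : ∀ a ∈ A, ∀ b ∈ A, a ≠ b → lt a b ∨ lt b a
  chain : ∀ a ∈ A, ∀ b ∈ A, lt a b → G.neighborSet a \ A ⊆ G.neighborSet b \ A

/-- `m` is the `lt`-maximum element of `S`. -/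
def IsMaxOf {V : Type*} (lt : V → V → Prop) (S : Set V) (m : V) : Prop :=
  m ∈ S ∧ ∀ x ∈ S, x ≠ m → lt x m

/-- `m` is the `lt`-minimum element of `S`. -/
def IsMinOf {V : Type*} (lt : V → V → Prop) (S : Set V) (m : V) : Prop :=
  m ∈ S ∧ ∀ x ∈ S, x ≠ m → lt m x

/-- `S` and `S'` are `lt`-equivalent (w.r.t. `G`): both are empty, or, listing the connected
components of `G[S]` (resp. `G[S']`) by strictly decreasing `lt`-maximum vertex, the first
components have the same maximum `m` (which is then the overall maximum) and the same minimum,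
and either both lists stop there, or both have a second component and these have the same
maximum. -/
def RepEquiv {V : Type*} (G : SimpleGraph V) (lt : V → V → Prop) (S S' : Set V) : Prop :=
  (S = ∅ ↔ S' = ∅) ∧
  (S.Nonempty → ∃ m, IsMaxOf lt S m ∧ IsMaxOf lt S' m ∧
    (∃ t, IsMinOf lt (indComp G S m) t ∧ IsMinOf lt (indComp G S' m) t) ∧
    ((S \ indComp G S m = ∅ ∧ S' \ indComp G S' m = ∅) ∨
      (∃ m₂, IsMaxOf lt (S \ indComp G S m) m₂ ∧ IsMaxOf lt (S' \ indComp G S' m) m₂)))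

section Helpers
variable {V : Type*} {H : SimpleGraph V} {S U : Set V}

lemma indReach_mono (hSU : S ⊆ U) {v w : V} (h : InducedReach H S v w) :
    InducedReach H U v w := by
  obtain ⟨hv, hw, hr⟩ := h
  exact ⟨hSU hv, hSU hw, hr.map ⟨Set.inclusion hSU, fun {a b} h => h⟩⟩

lemma indReach_of_adj {v w : V} (hv : v ∈ S) (hw : w ∈ S) (h : H.Adj v w) :
    InducedReach H S v w := ⟨hv, hw, SimpleGraph.Adj.reachable h⟩

lemma indReach_refl {v : V} (hv : v ∈ S) : InducedReach H S v v := ⟨hv, hv, .refl _⟩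

lemma indReach_symm {v w : V} : InducedReach H S v w → InducedReach H S w v :=
  fun ⟨hv, hw, hr⟩ => ⟨hw, hv, hr.symm⟩

lemma indReach_trans {u v w : V} :
    InducedReach H S u v → InducedReach H S v w → InducedReach H S u w :=
  fun ⟨hu, _, h1⟩ => fun ⟨_, hw, h2⟩ => ⟨hu, hw, h1.trans h2⟩

lemma p3_of_cluster (hcl : IsClusterSet H U) :
    ∀ a ∈ U, ∀ b ∈ U, ∀ c ∈ U, H.Adj a b → H.Adj b c → a ≠ c → H.Adj a c :=
  fun a ha b hb c hc h1 h2 hne =>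
    hcl a c (indReach_trans (indReach_of_adj ha hb h1) (indReach_of_adj hb hc h2)) hne

lemma cluster_of_p3
    (h3 : ∀ a ∈ U, ∀ b ∈ U, ∀ c ∈ U, H.Adj a b → H.Adj b c → a ≠ c → H.Adj a c) :
    IsClusterSet H U := by
  intro v w hvw hne
  obtain ⟨hv, hw, hr⟩ := hvw
  obtain ⟨p⟩ := hr
  have key : ∀ (x y : ↥U) (_ : (H.induce U).Walk x y), (x : V) = y ∨ H.Adj x y := by
    intro x y p
    induction p with
    | nil => exact Or.inl rfl
    | @cons x u y h p ih =>
      rcases ih with heq | hadj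
      · exact Or.inr (heq ▸ (h : H.Adj x u))
      · by_cases hxy : (x : V) = y
        · exact Or.inl hxy
        · exact Or.inr (h3 x x.2 u u.2 y y.2 h hadj hxy)
  rcases key _ _ p with heq | hadj
  · exact absurd heq hne
  · exact hadj

lemma repEquiv_symm {lt : V → V → Prop} {S S' : Set V}
    (h : RepEquiv H lt S S') : RepEquiv H lt S' S := by
  refine ⟨h.1.symm, fun hS' => ?_⟩
  have hS : S.Nonempty := by
    rcases Set.eq_empty_or_nonempty S with he | hn
    · exact absurd (h.1.mp he) (Set.nonempty_iff_ne_empty.mp hS')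
    · exact hn
  obtain ⟨m, h1, h2, ⟨t, h3, h4⟩, h5⟩ := h.2 hS
  exact ⟨m, h2, h1, ⟨t, h4, h3⟩,
    h5.imp (fun ⟨x, y⟩ => ⟨y, x⟩) (fun ⟨m₂, x, y⟩ => ⟨m₂, y, x⟩)⟩

lemma main_lemma {A : Set V} {lt' : V → V → Prop}
    (h : ChainOrderOn H A lt') {S S' T : Set V} (hS : S ⊆ A) (hS' : S' ⊆ A)
    (hcS' : IsClusterSet H S')
    (heq : RepEquiv H lt' S S') (hT : T ⊆ Aᶜ)
    (hST : IsClusterSet H (S ∪ T)) : IsClusterSet H (S' ∪ T) := by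
  have pST := p3_of_cluster hST
  rcases Set.eq_empty_or_nonempty S with hSe | hSne
  · have hS'e : S' = ∅ := heq.1.mp hSe
    apply cluster_of_p3
    intro a ha b hb c hc h1 h2 hne
    rw [hS'e, Set.empty_union] at ha hb hc
    exact pST a (Or.inr ha) b (Or.inr hb) c (Or.inr hc) h1 h2 hne
  obtain ⟨m, hmS, hmS', ⟨r, hrS, hrS'⟩, hrest⟩ := heq.2 hSne
  have neAT : ∀ {x y : V}, x ∈ A → y ∈ T → x ≠ y := fun hx hy hxy => (hT hy) (hxy ▸ hx)
  have chainN : ∀ {s s' : V}, s ∈ A → s' ∈ A → (s = s' ∨ lt' s s') →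
      ∀ {u}, u ∈ T → H.Adj s u → H.Adj s' u := by
    intro s s' hs hs' hss u hu hadj
    rcases hss with rfl | hlt
    · exact hadj
    · have hmem : u ∈ H.neighborSet s \ A := ⟨hadj, hT hu⟩
      exact (h.chain s hs s' hs' hlt hmem).1
  have MsubS : indComp H S m ⊆ S := fun x hx => by obtain ⟨_, h2, _⟩ := hx; exact h2
  have M'subS' : indComp H S' m ⊆ S' := fun x hx => by obtain ⟨_, h2, _⟩ := hx; exact h2
  have F1 : ∀ s ∈ S', ∀ u ∈ T, H.Adj s u → H.Adj m u := by
    intro s hs u hu hadj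
    refine chainN (hS' hs) (hS' hmS'.1) ?_ hu hadj
    by_cases hsm : s = m
    · exact Or.inl hsm
    · exact Or.inr (hmS'.2 s hs hsm)
  have FS1 : ∀ s ∈ S, ∀ u ∈ T, H.Adj s u → H.Adj m u := by
    intro s hs u hu hadj
    refine chainN (hS hs) (hS hmS.1) ?_ hu hadj
    by_cases hsm : s = m
    · exact Or.inl hsm
    · exact Or.inr (hmS.2 s hs hsm)
  have F2 : ∀ s ∈ S' \ indComp H S' m, ∀ u ∈ T, ¬ H.Adj s u := by
    intro s hs u hu hadj
    rcases hrest with ⟨_, hre'⟩ | ⟨m₂, hm₂, hm₂'⟩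
    · rw [hre'] at hs; exact hs
    · have hm₂A : m₂ ∈ A := hS hm₂.1.1
      have hadj2 : H.Adj m₂ u := by
        refine chainN (hS' hs.1) hm₂A ?_ hu hadj
        by_cases h2 : s = m₂
        · exact Or.inl h2
        · exact Or.inr (hm₂'.2 s hs h2)
      have hmu : H.Adj m u := FS1 m₂ hm₂.1.1 u hu hadj2
      have hmM : m ∈ indComp H S m := indReach_refl hmS.1
      have hne : m ≠ m₂ := fun e => hm₂.1.2 (e ▸ hmM)
      have hmm₂ : H.Adj m m₂ :=
        pST m (Or.inl hmS.1) u (Or.inr hu) m₂ (Or.inl hm₂.1.1) hmu hadj2.symm hne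
      exact hm₂.1.2 (indReach_of_adj hmS.1 hm₂.1.1 hmm₂)
  have Phi2 : ∀ u ∈ T, H.Adj m u → H.Adj r u := by
    intro u hu hadj
    have hrM : r ∈ indComp H S m := hrS.1
    have hrS0 : r ∈ S := MsubS hrM
    have hre : InducedReach H (S ∪ T) u r :=
      indReach_trans (indReach_of_adj (Or.inr hu) (Or.inl hmS.1) hadj.symm)
        (indReach_mono Set.subset_union_left hrM)
    exact (hST u r hre (neAT (hS hrS0) hu).symm).symm
  have F3 : ∀ s ∈ indComp H S' m, ∀ u ∈ T, H.Adj m u → H.Adj s u := by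
    intro s hsM u hu hadj
    have hru := Phi2 u hu hadj
    have hrA : r ∈ A := hS' (M'subS' hrS'.1)
    refine chainN hrA (hS' (M'subS' hsM)) ?_ hu hru
    by_cases hrs : r = s
    · exact Or.inl hrs
    · exact Or.inr (hrS'.2 s hsM (fun e => hrs e.symm))
  have closure : ∀ a ∈ S', ∀ b ∈ indComp H S' m, H.Adj a b → a ∈ indComp H S' m :=
    fun a ha b hb hadj => indReach_trans hb (indReach_of_adj (M'subS' hb) ha hadj.symm)
  have inM' : ∀ b ∈ S', ∀ u ∈ T, H.Adj b u → b ∈ indComp H S' m := by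
    intro b hb u hu hadj
    by_contra hbM
    exact F2 b ⟨hb, hbM⟩ u hu hadj
  apply cluster_of_p3
  intro a ha b hb c hc hab hbc hac
  rcases ha with haS | haT <;> rcases hb with hbS | hbT <;> rcases hc with hcS2 | hcT
  · exact hcS' a c
      (indReach_trans (indReach_of_adj haS hbS hab) (indReach_of_adj hbS hcS2 hbc)) hac
  · have hbM := inM' b hbS c hcT hbc
    have haM := closure a haS b hbM hab
    exact F3 a haM c hcT (F1 b hbS c hcT hbc)
  · have haM := inM' a haS b hbT hab
    have hcM := inM' c hcS2 b hbT hbc.symm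
    exact hcS' a c (indReach_trans (indReach_symm haM) hcM) hac
  · have haM := inM' a haS b hbT hab
    have hmc : H.Adj m c :=
      pST m (Or.inl hmS.1) b (Or.inr hbT) c (Or.inr hcT)
        (F1 a haS b hbT hab) hbc (neAT (hS hmS.1) hcT)
    exact F3 a haM c hcT hmc
  · have hbM := inM' b hbS a haT hab.symm
    have hcM := closure c hcS2 b hbM hbc.symm
    exact (F3 c hcM a haT (F1 b hbS a haT hab.symm)).symm
  · have hma := F1 b hbS a haT hab.symm
    have hmc := F1 b hbS c hcT hbc
    exact pST a (Or.inr haT) m (Or.inl hmS.1) c (Or.inr hcT) hma.symm hmc hac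
  · have hcM := inM' c hcS2 b hbT hbc.symm
    have hma : H.Adj m a :=
      pST m (Or.inl hmS.1) b (Or.inr hbT) a (Or.inr haT)
        (F1 c hcS2 b hbT hbc.symm) hab.symm (neAT (hS hmS.1) haT)
    exact (F3 c hcM a haT hma).symm
  · exact pST a (Or.inr haT) b (Or.inr hbT) c (Or.inr hcT) hab hbc hac

end Helpers

theorem stmt_10 {V : Type*} [Fintype V] (G : SimpleGraph V) (A : Set V)
    (hmim : ¬ CutIM G A 2) (lt : V → V → Prop) (hlt : ChainOrderOn G A lt) :
    ChainOrderOn Gᶜ A (fun v w => lt w v) ∧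
    ∀ S S' : Set V, S ⊆ A → S' ⊆ A →
      IsClusterSet Gᶜ S → IsClusterSet Gᶜ S' →
      RepEquiv Gᶜ (fun v w => lt w v) S S' →
      ∀ T : Set V, T ⊆ Aᶜ →
        (IsClusterSet Gᶜ (S ∪ T) ↔ IsClusterSet Gᶜ (S' ∪ T)) := by
  have hlt' : ChainOrderOn Gᶜ A (fun v w => lt w v) := by
    constructor
    · intro a ha b hb c hc h1 h2
      exact hlt.trans hc hb ha h2 h1
    · intro a ha
      exact hlt.irrefl a ha
    · intro a ha b hb hne
      exact (hlt.total a ha b hb hne).symm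
    · intro a ha b hb hba y hy
      obtain ⟨hady, hyA⟩ := hy
      have hady' : Gᶜ.Adj a y := hady
      rw [SimpleGraph.compl_adj] at hady'
      refine ⟨?_, hyA⟩
      rw [SimpleGraph.mem_neighborSet, SimpleGraph.compl_adj]
      refine ⟨fun e => hyA (e ▸ hb), fun hGby => ?_⟩
      have hmem : y ∈ G.neighborSet b \ A := ⟨hGby, hyA⟩
      exact hady'.2 (hlt.chain b hb a ha hba hmem).1
  refine ⟨hlt', ?_⟩
  intro S S' hSA hS'A hcS hcS' heq T hT
  exact ⟨fun hh => main_lemma hlt' hSA hS'A hcS' heq hT hh,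
         fun hh => main_lemma hlt' hS'A hSA hcS (repEquiv_symm heq) hT hh⟩
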